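/- Let A and B be Hopf algebras over k and let τ : B⊗A → A⊗B be a twisting map satisfying the comultiplication-compatibility condition (Δ_A⊗Δ_B)∘τ = (1_A⊗τ⊗1_B)∘(τ⊗τ)∘(1_B⊗τ⊗1_A)∘(Δ_B⊗Δ_A). If the twisted tensor product A⊗_τ B, with its induced multiplication, unit, comultiplication and counit, is a Hopf algebra, then it equals the ordinary tensor product Hopf algebra A⊗B (in particular τ is the flip). -/
import Mathlib


open scoped TensorProduct

namespace TTP

section Defs

variable (k : Type*) [Field k]

section MidMap

variable {X P Q Y R S : Type*}
  [AddCommGroup X] [Module k X] [AddCommGroup P] [Module k P]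
  [AddCommGroup Q] [Module k Q] [AddCommGroup Y] [Module k Y]
  [AddCommGroup R] [Module k R] [AddCommGroup S] [Module k S]

/-- The map `1_X ⊗ f ⊗ 1_Y` (with the canonical reassociations). -/
noncomputable def midMap (f : P ⊗[k] Q →ₗ[k] R ⊗[k] S) :
    (X ⊗[k] P) ⊗[k] (Q ⊗[k] Y) →ₗ[k] (X ⊗[k] R) ⊗[k] (S ⊗[k] Y) :=
  (TensorProduct.assoc k (X ⊗[k] R) S Y).toLinearMap
    ∘ₗ TensorProduct.map (TensorProduct.assoc k X R S).symm.toLinearMap LinearMap.id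
    ∘ₗ TensorProduct.map (TensorProduct.map LinearMap.id f) LinearMap.id
    ∘ₗ TensorProduct.map (TensorProduct.assoc k X P Q).toLinearMap LinearMap.id
    ∘ₗ (TensorProduct.assoc k (X ⊗[k] P) Q Y).symm.toLinearMap

end MidMap

variable {A B : Type*} [AddCommGroup A] [Module k A] [AddCommGroup B] [Module k B]

/-- `(A, mul, unit)` is a unital associative `k`-algebra (diagrammatically). -/
def IsUnitalAssoc (mul : A ⊗[k] A →ₗ[k] A) (unit : k →ₗ[k] A) : Prop :=
  mul ∘ₗ TensorProduct.map unit LinearMap.id ∘ₗ (TensorProduct.lid k A).symm.toLinearMap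
      = LinearMap.id
  ∧ mul ∘ₗ TensorProduct.map LinearMap.id unit ∘ₗ (TensorProduct.rid k A).symm.toLinearMap
      = LinearMap.id
  ∧ mul ∘ₗ TensorProduct.map mul LinearMap.id
      = mul ∘ₗ TensorProduct.map LinearMap.id mul ∘ₗ (TensorProduct.assoc k A A A).toLinearMap

/-- `(A, comul, counit)` is a counital coassociative `k`-coalgebra (diagrammatically). -/
def IsCounitalCoassoc (comul : A →ₗ[k] A ⊗[k] A) (counit : A →ₗ[k] k) : Prop :=
  (TensorProduct.lid k A).toLinearMap ∘ₗ TensorProduct.map counit LinearMap.id ∘ₗ comul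
      = LinearMap.id
  ∧ (TensorProduct.rid k A).toLinearMap ∘ₗ TensorProduct.map LinearMap.id counit ∘ₗ comul
      = LinearMap.id
  ∧ TensorProduct.map comul LinearMap.id ∘ₗ comul
      = (TensorProduct.assoc k A A A).symm.toLinearMap
          ∘ₗ TensorProduct.map LinearMap.id comul ∘ₗ comul

/-- `τ : B ⊗ A → A ⊗ B` is a twisting map for the algebras `A` and `B`:
it is compatible with both units and with both multiplications. -/
def IsTwisting (mulA : A ⊗[k] A →ₗ[k] A) (unitA : k →ₗ[k] A)
    (mulB : B ⊗[k] B →ₗ[k] B) (unitB : k →ₗ[k] B)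
    (τ : B ⊗[k] A →ₗ[k] A ⊗[k] B) : Prop :=
  τ ∘ₗ TensorProduct.map LinearMap.id unitA
      = TensorProduct.map unitA LinearMap.id ∘ₗ (TensorProduct.comm k B k).toLinearMap
  ∧ τ ∘ₗ TensorProduct.map unitB LinearMap.id
      = TensorProduct.map LinearMap.id unitB ∘ₗ (TensorProduct.comm k k A).toLinearMap
  ∧ τ ∘ₗ TensorProduct.map mulB mulA
      = TensorProduct.map mulA mulB ∘ₗ midMap k τ ∘ₗ TensorProduct.map τ τ ∘ₗ midMap k τ

/-- The multiplication `(∇_A ⊗ ∇_B) ∘ (1 ⊗ τ ⊗ 1)` of the twisted tensor product. -/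
noncomputable def tMul (mulA : A ⊗[k] A →ₗ[k] A) (mulB : B ⊗[k] B →ₗ[k] B)
    (τ : B ⊗[k] A →ₗ[k] A ⊗[k] B) :
    (A ⊗[k] B) ⊗[k] (A ⊗[k] B) →ₗ[k] A ⊗[k] B :=
  TensorProduct.map mulA mulB ∘ₗ midMap k τ

/-- The unit `(η_A ⊗ η_B) ∘ (k ≅ k ⊗ k)` of the twisted tensor product. -/
noncomputable def tUnit (unitA : k →ₗ[k] A) (unitB : k →ₗ[k] B) : k →ₗ[k] A ⊗[k] B :=
  TensorProduct.map unitA unitB ∘ₗ (TensorProduct.lid k k).symm.toLinearMap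

/-- The comultiplication `(1 ⊗ τ⁻¹ ⊗ 1) ∘ (Δ_A ⊗ Δ_B)` of the twisted tensor product. -/
noncomputable def tComul (comulA : A →ₗ[k] A ⊗[k] A) (comulB : B →ₗ[k] B ⊗[k] B)
    (τinv : A ⊗[k] B →ₗ[k] B ⊗[k] A) :
    A ⊗[k] B →ₗ[k] (A ⊗[k] B) ⊗[k] (A ⊗[k] B) :=
  midMap k τinv ∘ₗ TensorProduct.map comulA comulB

/-- The counit `(k ⊗ k ≅ k) ∘ (ε_A ⊗ ε_B)` of the twisted tensor product. -/
noncomputable def tCounit (counitA : A →ₗ[k] k) (counitB : B →ₗ[k] k) :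
    A ⊗[k] B →ₗ[k] k :=
  (TensorProduct.lid k k).toLinearMap ∘ₗ TensorProduct.map counitA counitB

/-- Compatibility of `τ` with the counits (diagram (5) of the paper). -/
def CounitCompat (counitA : A →ₗ[k] k) (counitB : B →ₗ[k] k)
    (τ : B ⊗[k] A →ₗ[k] A ⊗[k] B) : Prop :=
  TensorProduct.map counitA LinearMap.id ∘ₗ τ
      = (TensorProduct.comm k B k).toLinearMap ∘ₗ TensorProduct.map LinearMap.id counitA
  ∧ TensorProduct.map LinearMap.id counitB ∘ₗ τ
      = (TensorProduct.comm k k A).toLinearMap ∘ₗ TensorProduct.map counitB LinearMap.id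

/-- Compatibility of `τ` with the comultiplications (diagram (6) of the paper):
`(Δ_A ⊗ Δ_B)∘τ = (1⊗τ⊗1)∘(τ⊗τ)∘(1⊗τ⊗1)∘(Δ_B ⊗ Δ_A)`. -/
def ComulCompat (comulA : A →ₗ[k] A ⊗[k] A) (comulB : B →ₗ[k] B ⊗[k] B)
    (τ : B ⊗[k] A →ₗ[k] A ⊗[k] B) : Prop :=
  TensorProduct.map comulA comulB ∘ₗ τ
      = midMap k τ ∘ₗ TensorProduct.map τ τ ∘ₗ midMap k τ ∘ₗ TensorProduct.map comulB comulA

/-- `(f ⊗ 1_B) ∘ τ = (1_A ⊗ τ) ∘ (τ ⊗ 1_A) ∘ (1_B ⊗ f)` for `f : A → A ⊗ A`. -/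
def MidACompat (f : A →ₗ[k] A ⊗[k] A) (τ : B ⊗[k] A →ₗ[k] A ⊗[k] B) : Prop :=
  TensorProduct.map f LinearMap.id ∘ₗ τ
    = (TensorProduct.assoc k A A B).symm.toLinearMap
      ∘ₗ TensorProduct.map LinearMap.id τ
      ∘ₗ (TensorProduct.assoc k A B A).toLinearMap
      ∘ₗ TensorProduct.map τ LinearMap.id
      ∘ₗ (TensorProduct.assoc k B A A).symm.toLinearMap
      ∘ₗ TensorProduct.map LinearMap.id f

/-- `(1_A ⊗ g) ∘ τ = (τ ⊗ 1_B) ∘ (1_B ⊗ τ) ∘ (g ⊗ 1_A)` for `g : B → B ⊗ B`. -/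
def MidBCompat (g : B →ₗ[k] B ⊗[k] B) (τ : B ⊗[k] A →ₗ[k] A ⊗[k] B) : Prop :=
  TensorProduct.map LinearMap.id g ∘ₗ τ
    = (TensorProduct.assoc k A B B).toLinearMap
      ∘ₗ TensorProduct.map τ LinearMap.id
      ∘ₗ (TensorProduct.assoc k B A B).symm.toLinearMap
      ∘ₗ TensorProduct.map LinearMap.id τ
      ∘ₗ (TensorProduct.assoc k B B A).toLinearMap
      ∘ₗ TensorProduct.map g LinearMap.id

/-- `(A, mul, unit, comul, counit)` is a Frobenius algebra (diagrammatically). -/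
def IsFrobenius (mul : A ⊗[k] A →ₗ[k] A) (unit : k →ₗ[k] A)
    (comul : A →ₗ[k] A ⊗[k] A) (counit : A →ₗ[k] k) : Prop :=
  IsUnitalAssoc k mul unit
  ∧ IsCounitalCoassoc k comul counit
  ∧ comul ∘ₗ mul
      = TensorProduct.map LinearMap.id mul ∘ₗ (TensorProduct.assoc k A A A).toLinearMap
          ∘ₗ TensorProduct.map comul LinearMap.id
  ∧ comul ∘ₗ mul
      = TensorProduct.map mul LinearMap.id ∘ₗ (TensorProduct.assoc k A A A).symm.toLinearMap
          ∘ₗ TensorProduct.map LinearMap.id comul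

/-- `(A, mul, unit, comul, counit)` is a bialgebra (diagrammatically). -/
def IsBialgebra (mul : A ⊗[k] A →ₗ[k] A) (unit : k →ₗ[k] A)
    (comul : A →ₗ[k] A ⊗[k] A) (counit : A →ₗ[k] k) : Prop :=
  IsUnitalAssoc k mul unit
  ∧ IsCounitalCoassoc k comul counit
  ∧ counit ∘ₗ mul = (TensorProduct.lid k k).toLinearMap ∘ₗ TensorProduct.map counit counit
  ∧ comul ∘ₗ unit = TensorProduct.map unit unit ∘ₗ (TensorProduct.lid k k).symm.toLinearMap
  ∧ counit ∘ₗ unit = LinearMap.id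
  ∧ comul ∘ₗ mul
      = TensorProduct.map mul mul ∘ₗ midMap k (TensorProduct.comm k A A).toLinearMap
          ∘ₗ TensorProduct.map comul comul

/-- `(A, mul, unit, comul, counit)` is a Hopf algebra: a bialgebra with an antipode. -/
def IsHopf (mul : A ⊗[k] A →ₗ[k] A) (unit : k →ₗ[k] A)
    (comul : A →ₗ[k] A ⊗[k] A) (counit : A →ₗ[k] k) : Prop :=
  IsBialgebra k mul unit comul counit
  ∧ ∃ S : A →ₗ[k] A,
      mul ∘ₗ TensorProduct.map S LinearMap.id ∘ₗ comul = unit ∘ₗ counit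
      ∧ mul ∘ₗ TensorProduct.map LinearMap.id S ∘ₗ comul = unit ∘ₗ counit

/-- `Γ` is a right inverse of the multiplication which is a bimodule morphism,
witnessing separability of the algebra. -/
def IsSeparableWith (mul : A ⊗[k] A →ₗ[k] A) (Γ : A →ₗ[k] A ⊗[k] A) : Prop :=
  mul ∘ₗ Γ = LinearMap.id
  ∧ Γ ∘ₗ mul ∘ₗ TensorProduct.map LinearMap.id mul
      = TensorProduct.map mul mul
          ∘ₗ (TensorProduct.assoc k A A (A ⊗[k] A)).symm.toLinearMap
          ∘ₗ TensorProduct.map LinearMap.id (TensorProduct.assoc k A A A).toLinearMap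
          ∘ₗ TensorProduct.map LinearMap.id (TensorProduct.map Γ LinearMap.id)

/-- The pairing `β` is associative: `β∘(1⊗∇) = β∘(∇⊗1)`. -/
def PairingAssoc (mul : A ⊗[k] A →ₗ[k] A) (β : A ⊗[k] A →ₗ[k] k) : Prop :=
  β ∘ₗ TensorProduct.map LinearMap.id mul ∘ₗ (TensorProduct.assoc k A A A).toLinearMap
    = β ∘ₗ TensorProduct.map mul LinearMap.id

/-- The pairing `β` is non-degenerate with co-pairing `α`:
`(1⊗β)∘(α⊗1) = 1_A` under the canonical isomorphisms. -/
def PairingNondeg (β : A ⊗[k] A →ₗ[k] k) (α : k →ₗ[k] A ⊗[k] A) : Prop :=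
  (TensorProduct.rid k A).toLinearMap
      ∘ₗ TensorProduct.map LinearMap.id β
      ∘ₗ (TensorProduct.assoc k A A A).toLinearMap
      ∘ₗ TensorProduct.map α LinearMap.id
      ∘ₗ (TensorProduct.lid k A).symm.toLinearMap = LinearMap.id

/-- The pairing `β` is symmetric: `β ∘ σ = β` for the flip `σ`. -/
def PairingSymm (β : A ⊗[k] A →ₗ[k] k) : Prop :=
  β ∘ₗ (TensorProduct.comm k A A).toLinearMap = β

end Defs

end TTP

section Aux

open TTP

variable {k : Type*} [Field k]
variable {X P Q Y R S R' S' : Type*}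
  [AddCommGroup X] [Module k X] [AddCommGroup P] [Module k P]
  [AddCommGroup Q] [Module k Q] [AddCommGroup Y] [Module k Y]
  [AddCommGroup R] [Module k R] [AddCommGroup S] [Module k S]
  [AddCommGroup R'] [Module k R'] [AddCommGroup S'] [Module k S']

lemma midMap_tmul (f : P ⊗[k] Q →ₗ[k] R ⊗[k] S) (x : X) (p : P) (q : Q) (y : Y) :
    midMap k (X := X) (Y := Y) f ((x ⊗ₜ p) ⊗ₜ (q ⊗ₜ y))
      = (TensorProduct.assoc k (X ⊗[k] R) S Y)
          (((TensorProduct.assoc k X R S).symm (x ⊗ₜ f (p ⊗ₜ q))) ⊗ₜ y) := by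
  simp [midMap]

lemma midMap_tmul_of (f : P ⊗[k] Q →ₗ[k] R ⊗[k] S) {x : X} {p : P} {q : Q} {y : Y}
    {r : R} {s : S} (h : f (p ⊗ₜ q) = r ⊗ₜ s) :
    midMap k (X := X) (Y := Y) f ((x ⊗ₜ p) ⊗ₜ (q ⊗ₜ y)) = (x ⊗ₜ r) ⊗ₜ (s ⊗ₜ y) := by
  rw [midMap_tmul, h]; simp

lemma midMap_comp (f : P ⊗[k] Q →ₗ[k] R ⊗[k] S) (g : R ⊗[k] S →ₗ[k] R' ⊗[k] S') :
    midMap k (X := X) (Y := Y) g ∘ₗ midMap k f = midMap k (g ∘ₗ f) := by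
  apply TensorProduct.ext_fourfold'
  intro x p q y
  simp only [LinearMap.comp_apply, midMap_tmul]
  generalize f (p ⊗ₜ q) = t
  induction t using TensorProduct.induction_on with
  | zero => simp
  | tmul r s =>
      simp only [TensorProduct.assoc_symm_tmul, TensorProduct.assoc_tmul]
      rw [midMap_tmul]
  | add t₁ t₂ h₁ h₂ =>
      simp only [map_add, TensorProduct.add_tmul, TensorProduct.tmul_add] at *
      rw [h₁, h₂]

lemma midMap_id :
    midMap k (X := X) (Y := Y) (LinearMap.id : P ⊗[k] Q →ₗ[k] P ⊗[k] Q) = LinearMap.id := by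
  apply TensorProduct.ext_fourfold'
  intro x p q y
  simp [midMap_tmul]

lemma midMap_counit_natural (f : P ⊗[k] Q →ₗ[k] R ⊗[k] S) (φ : X →ₗ[k] k) (ψ : Y →ₗ[k] k) :
    TensorProduct.map ((TensorProduct.lid k R).toLinearMap ∘ₗ TensorProduct.map φ LinearMap.id)
        ((TensorProduct.rid k S).toLinearMap ∘ₗ TensorProduct.map LinearMap.id ψ)
      ∘ₗ midMap k f
    = f ∘ₗ TensorProduct.map
        ((TensorProduct.lid k P).toLinearMap ∘ₗ TensorProduct.map φ LinearMap.id)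
        ((TensorProduct.rid k Q).toLinearMap ∘ₗ TensorProduct.map LinearMap.id ψ) := by
  apply TensorProduct.ext_fourfold'
  intro x p q y
  simp only [LinearMap.comp_apply, midMap_tmul, TensorProduct.map_tmul, LinearMap.id_apply,
    LinearEquiv.coe_coe]
  rw [TensorProduct.lid_tmul, TensorProduct.rid_tmul]
  rw [show f ((φ x • p) ⊗ₜ (ψ y • q)) = (φ x * ψ y) • f (p ⊗ₜ q) by
    rw [TensorProduct.tmul_smul, ← TensorProduct.smul_tmul', map_smul, map_smul, smul_smul,
      mul_comm]]
  generalize f (p ⊗ₜ q) = t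
  induction t using TensorProduct.induction_on with
  | zero => simp
  | tmul r s =>
      simp [TensorProduct.smul_tmul', TensorProduct.tmul_smul, smul_smul, mul_comm]
  | add t₁ t₂ h₁ h₂ =>
      simp only [map_add, TensorProduct.add_tmul, TensorProduct.tmul_add, smul_add] at *
      rw [h₁, h₂]

end Aux

section Aux2

open TTP

variable {k : Type*} [Field k]
variable {A B : Type*} [AddCommGroup A] [Module k A] [AddCommGroup B] [Module k B]

/-- `b ↦ 1_A ⊗ b`. -/
noncomputable def jL (unitA : k →ₗ[k] A) : B →ₗ[k] A ⊗[k] B :=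
  TensorProduct.map unitA LinearMap.id ∘ₗ (TensorProduct.lid k B).symm.toLinearMap

/-- `a ↦ a ⊗ 1_B`. -/
noncomputable def jR (unitB : k →ₗ[k] B) : A →ₗ[k] A ⊗[k] B :=
  TensorProduct.map LinearMap.id unitB ∘ₗ (TensorProduct.rid k A).symm.toLinearMap

@[simp] lemma jL_apply (unitA : k →ₗ[k] A) (b : B) :
    jL unitA b = unitA 1 ⊗ₜ b := by simp [jL]

@[simp] lemma jR_apply (unitB : k →ₗ[k] B) (a : A) :
    jR unitB a = a ⊗ₜ unitB 1 := by simp [jR]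

/-- `x ⊗ m ↦ φ(x) • m`. -/
noncomputable def epsL (φ : A →ₗ[k] k) (M : Type*) [AddCommGroup M] [Module k M] :
    A ⊗[k] M →ₗ[k] M :=
  (TensorProduct.lid k M).toLinearMap ∘ₗ TensorProduct.map φ LinearMap.id

/-- `m ⊗ y ↦ ψ(y) • m`. -/
noncomputable def epsR (ψ : B →ₗ[k] k) (M : Type*) [AddCommGroup M] [Module k M] :
    M ⊗[k] B →ₗ[k] M :=
  (TensorProduct.rid k M).toLinearMap ∘ₗ TensorProduct.map LinearMap.id ψ

@[simp] lemma epsL_apply (φ : A →ₗ[k] k) {M : Type*} [AddCommGroup M] [Module k M]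
    (a : A) (m : M) : epsL φ M (a ⊗ₜ m) = φ a • m := by simp [epsL]

@[simp] lemma epsR_apply (ψ : B →ₗ[k] k) {M : Type*} [AddCommGroup M] [Module k M]
    (m : M) (b : B) : epsR ψ M (m ⊗ₜ b) = ψ b • m := by simp [epsR]

lemma midMap_counit_natural' {P Q R S : Type*}
    [AddCommGroup P] [Module k P] [AddCommGroup Q] [Module k Q]
    [AddCommGroup R] [Module k R] [AddCommGroup S] [Module k S]
    (f : P ⊗[k] Q →ₗ[k] R ⊗[k] S) (φ : A →ₗ[k] k) (ψ : B →ₗ[k] k) :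
    TensorProduct.map (epsL φ R) (epsR ψ S) ∘ₗ midMap k (X := A) (Y := B) f
      = f ∘ₗ TensorProduct.map (epsL φ P) (epsR ψ Q) := by
  unfold epsL epsR
  exact midMap_counit_natural f φ ψ

end Aux2

open TTP in
/-- Corollary 4.5 of the paper: if a twisted tensor product of Hopf
algebras (with comultiplication-compatible twisting map) is a Hopf algebra, then
it is the ordinary tensor product Hopf algebra; in particular `τ` is the flip. -/
theorem twistedTensorProduct_hopf_is_trivial
    {k A B : Type*} [Field k]
    [AddCommGroup A] [Module k A] [AddCommGroup B] [Module k B]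
    (mulA : A ⊗[k] A →ₗ[k] A) (unitA : k →ₗ[k] A)
    (comulA : A →ₗ[k] A ⊗[k] A) (counitA : A →ₗ[k] k)
    (mulB : B ⊗[k] B →ₗ[k] B) (unitB : k →ₗ[k] B)
    (comulB : B →ₗ[k] B ⊗[k] B) (counitB : B →ₗ[k] k)
    (hA : IsHopf k mulA unitA comulA counitA)
    (hB : IsHopf k mulB unitB comulB counitB)
    (τ : B ⊗[k] A ≃ₗ[k] A ⊗[k] B)
    (hτ : IsTwisting k mulA unitA mulB unitB τ.toLinearMap)
    (hcompat : ComulCompat k comulA comulB τ.toLinearMap)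
    (hhopf : IsHopf k (tMul k mulA mulB τ.toLinearMap) (tUnit k unitA unitB)
        (tComul k comulA comulB τ.symm.toLinearMap) (tCounit k counitA counitB)) :
    τ = TensorProduct.comm k B A
    ∧ tMul k mulA mulB τ.toLinearMap
        = tMul k mulA mulB (TensorProduct.comm k B A).toLinearMap
    ∧ tComul k comulA comulB τ.symm.toLinearMap
        = tComul k comulA comulB (TensorProduct.comm k A B).toLinearMap := by
  -- abbreviations via plain terms
  -- unit facts
  have hmulA1 : ∀ x : A, mulA (unitA 1 ⊗ₜ x) = x := by
    intro x
    have := LinearMap.congr_fun hA.1.1.1 x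
    simpa using this
  have hmulB1 : ∀ y : B, mulB (y ⊗ₜ unitB 1) = y := by
    intro y
    have := LinearMap.congr_fun hB.1.1.2.1 y
    simpa using this
  have hτu : ∀ b : B, τ (b ⊗ₜ unitA 1) = unitA 1 ⊗ₜ b := by
    intro b
    have := LinearMap.congr_fun hτ.1 (b ⊗ₜ (1 : k))
    simpa using this
  have hτv : ∀ a : A, τ (unitB 1 ⊗ₜ a) = a ⊗ₜ unitB 1 := by
    intro a
    have := LinearMap.congr_fun hτ.2.1 ((1 : k) ⊗ₜ a)
    simpa using this
  have hτu' : ∀ b : B, τ.symm (unitA 1 ⊗ₜ b) = b ⊗ₜ unitA 1 := by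
    intro b
    rw [← hτu b, LinearEquiv.symm_apply_apply]
  have hτv' : ∀ a : A, τ.symm (a ⊗ₜ unitB 1) = unitB 1 ⊗ₜ a := by
    intro a
    rw [← hτv a, LinearEquiv.symm_apply_apply]
  have hΔAu : comulA (unitA 1) = unitA 1 ⊗ₜ unitA 1 := by
    have := LinearMap.congr_fun hA.1.2.2.2.1 (1 : k)
    simpa using this
  have hΔBv : comulB (unitB 1) = unitB 1 ⊗ₜ unitB 1 := by
    have := LinearMap.congr_fun hB.1.2.2.2.1 (1 : k)
    simpa using this
  -- P1
  have P1 : tMul k mulA mulB τ.toLinearMap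
        ∘ₗ TensorProduct.map (jL unitA) (jR unitB) = τ.toLinearMap := by
    apply TensorProduct.ext'
    intro b a
    simp only [LinearMap.comp_apply, TensorProduct.map_tmul, jL_apply, jR_apply, tMul,
      LinearEquiv.coe_coe]
    rw [midMap_tmul]
    generalize τ (b ⊗ₜ a) = t
    induction t using TensorProduct.induction_on with
    | zero => simp
    | tmul x y => simp [hmulA1, hmulB1]
    | add t₁ t₂ h₁ h₂ =>
        simp only [map_add, TensorProduct.tmul_add, TensorProduct.add_tmul] at *
        rw [h₁, h₂]
  -- P2
  have P2 : tComul k comulA comulB τ.symm.toLinearMap ∘ₗ jL unitA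
      = TensorProduct.map (jL unitA) (jL unitA) ∘ₗ comulB := by
    apply LinearMap.ext
    intro b
    simp only [LinearMap.comp_apply, jL_apply, tComul, TensorProduct.map_tmul, hΔAu]
    generalize comulB b = t
    induction t using TensorProduct.induction_on with
    | zero => simp
    | tmul b1 b2 => rw [midMap_tmul_of _ (by rw [LinearEquiv.coe_coe]; exact hτu' b1)]; simp
    | add t₁ t₂ h₁ h₂ =>
        simp only [map_add, TensorProduct.tmul_add] at *
        rw [h₁, h₂]
  -- P3
  have P3 : tComul k comulA comulB τ.symm.toLinearMap ∘ₗ jR unitB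
      = TensorProduct.map (jR unitB) (jR unitB) ∘ₗ comulA := by
    apply LinearMap.ext
    intro a
    simp only [LinearMap.comp_apply, jR_apply, tComul, TensorProduct.map_tmul, hΔBv]
    generalize comulA a = t
    induction t using TensorProduct.induction_on with
    | zero => simp
    | tmul a1 a2 => rw [midMap_tmul_of _ (by rw [LinearEquiv.coe_coe]; exact hτv' a2)]; simp
    | add t₁ t₂ h₁ h₂ =>
        simp only [map_add, TensorProduct.add_tmul] at *
        rw [h₁, h₂]
  -- P5
  have P5 : midMap k (X := A ⊗[k] B) (Y := A ⊗[k] B) (TensorProduct.comm k (A ⊗[k] B) (A ⊗[k] B)).toLinearMap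
        ∘ₗ TensorProduct.map (TensorProduct.map (jL unitA) (jL unitA))
            (TensorProduct.map (jR unitB) (jR unitB))
      = TensorProduct.map (TensorProduct.map (jL unitA) (jR unitB))
            (TensorProduct.map (jL unitA) (jR unitB))
        ∘ₗ midMap k (X := B) (Y := A) (TensorProduct.comm k B A).toLinearMap := by
    apply TensorProduct.ext_fourfold'
    intro b1 b2 a1 a2
    simp only [LinearMap.comp_apply, TensorProduct.map_tmul, jL_apply, jR_apply]
    rw [midMap_tmul_of _
        (show (TensorProduct.comm k (A ⊗[k] B) (A ⊗[k] B)).toLinearMap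
            ((unitA 1 ⊗ₜ[k] b2) ⊗ₜ[k] (a1 ⊗ₜ[k] unitB 1))
          = (a1 ⊗ₜ[k] unitB 1) ⊗ₜ[k] (unitA 1 ⊗ₜ[k] b2) by simp),
      midMap_tmul_of _
        (show (TensorProduct.comm k B A).toLinearMap (b2 ⊗ₜ[k] a1) = a1 ⊗ₜ[k] b2 by simp)]
    simp
  have hσ'σ : τ.symm.toLinearMap ∘ₗ τ.toLinearMap = LinearMap.id := by
    apply LinearMap.ext; intro t; simp
  -- step I
  have hI : tComul k comulA comulB τ.symm.toLinearMap ∘ₗ τ.toLinearMap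
      = TensorProduct.map τ.toLinearMap τ.toLinearMap
        ∘ₗ midMap k (X := B) (Y := A) (TensorProduct.comm k B A).toLinearMap
        ∘ₗ TensorProduct.map comulB comulA := by
    calc tComul k comulA comulB τ.symm.toLinearMap ∘ₗ τ.toLinearMap
        = tComul k comulA comulB τ.symm.toLinearMap
            ∘ₗ (tMul k mulA mulB τ.toLinearMap
              ∘ₗ TensorProduct.map (jL unitA) (jR unitB)) := by rw [P1]
      _ = (tComul k comulA comulB τ.symm.toLinearMap ∘ₗ tMul k mulA mulB τ.toLinearMap)
            ∘ₗ TensorProduct.map (jL unitA) (jR unitB) := by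
            rw [LinearMap.comp_assoc]
      _ = (TensorProduct.map (tMul k mulA mulB τ.toLinearMap) (tMul k mulA mulB τ.toLinearMap)
            ∘ₗ midMap k (X := A ⊗[k] B) (Y := A ⊗[k] B) (TensorProduct.comm k (A ⊗[k] B) (A ⊗[k] B)).toLinearMap
            ∘ₗ TensorProduct.map (tComul k comulA comulB τ.symm.toLinearMap)
                (tComul k comulA comulB τ.symm.toLinearMap))
            ∘ₗ TensorProduct.map (jL unitA) (jR unitB) := by
            rw [hhopf.1.2.2.2.2.2]
      _ = TensorProduct.map (tMul k mulA mulB τ.toLinearMap) (tMul k mulA mulB τ.toLinearMap)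
            ∘ₗ midMap k (X := A ⊗[k] B) (Y := A ⊗[k] B) (TensorProduct.comm k (A ⊗[k] B) (A ⊗[k] B)).toLinearMap
            ∘ₗ (TensorProduct.map
                (tComul k comulA comulB τ.symm.toLinearMap ∘ₗ jL unitA)
                (tComul k comulA comulB τ.symm.toLinearMap ∘ₗ jR unitB)) := by
            rw [TensorProduct.map_comp]
            simp only [LinearMap.comp_assoc]
      _ = TensorProduct.map (tMul k mulA mulB τ.toLinearMap) (tMul k mulA mulB τ.toLinearMap)
            ∘ₗ midMap k (X := A ⊗[k] B) (Y := A ⊗[k] B) (TensorProduct.comm k (A ⊗[k] B) (A ⊗[k] B)).toLinearMap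
            ∘ₗ (TensorProduct.map (TensorProduct.map (jL unitA) (jL unitA) ∘ₗ comulB)
                (TensorProduct.map (jR unitB) (jR unitB) ∘ₗ comulA)) := by
            rw [P2, P3]
      _ = TensorProduct.map (tMul k mulA mulB τ.toLinearMap) (tMul k mulA mulB τ.toLinearMap)
            ∘ₗ (midMap k (X := A ⊗[k] B) (Y := A ⊗[k] B) (TensorProduct.comm k (A ⊗[k] B) (A ⊗[k] B)).toLinearMap
            ∘ₗ TensorProduct.map (TensorProduct.map (jL unitA) (jL unitA))
                (TensorProduct.map (jR unitB) (jR unitB)))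
            ∘ₗ TensorProduct.map comulB comulA := by
            rw [TensorProduct.map_comp]
            simp only [LinearMap.comp_assoc]
      _ = TensorProduct.map (tMul k mulA mulB τ.toLinearMap) (tMul k mulA mulB τ.toLinearMap)
            ∘ₗ (TensorProduct.map (TensorProduct.map (jL unitA) (jR unitB))
                (TensorProduct.map (jL unitA) (jR unitB))
            ∘ₗ midMap k (X := B) (Y := A) (TensorProduct.comm k B A).toLinearMap)
            ∘ₗ TensorProduct.map comulB comulA := by rw [P5]
      _ = (TensorProduct.map (tMul k mulA mulB τ.toLinearMap) (tMul k mulA mulB τ.toLinearMap)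
            ∘ₗ TensorProduct.map (TensorProduct.map (jL unitA) (jR unitB))
                (TensorProduct.map (jL unitA) (jR unitB)))
            ∘ₗ midMap k (X := B) (Y := A) (TensorProduct.comm k B A).toLinearMap
            ∘ₗ TensorProduct.map comulB comulA := by
            simp only [LinearMap.comp_assoc]
      _ = TensorProduct.map τ.toLinearMap τ.toLinearMap
            ∘ₗ midMap k (X := B) (Y := A) (TensorProduct.comm k B A).toLinearMap
            ∘ₗ TensorProduct.map comulB comulA := by
            rw [← TensorProduct.map_comp, P1]
  -- step II
  have hII : tComul k comulA comulB τ.symm.toLinearMap ∘ₗ τ.toLinearMap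
      = TensorProduct.map τ.toLinearMap τ.toLinearMap
        ∘ₗ midMap k (X := B) (Y := A) τ.toLinearMap ∘ₗ TensorProduct.map comulB comulA := by
    unfold tComul
    rw [LinearMap.comp_assoc, hcompat, ← LinearMap.comp_assoc, midMap_comp, hσ'σ, midMap_id,
      LinearMap.id_comp]
  -- cancel map σ σ
  have hcancel : midMap k (X := B) (Y := A) τ.toLinearMap ∘ₗ TensorProduct.map comulB comulA
      = midMap k (X := B) (Y := A) (TensorProduct.comm k B A).toLinearMap
        ∘ₗ TensorProduct.map comulB comulA := by
    have h := hII.symm.trans hI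
    have h2 := congrArg
      (fun m => TensorProduct.map τ.symm.toLinearMap τ.symm.toLinearMap ∘ₗ m) h
    simp only [← LinearMap.comp_assoc, ← TensorProduct.map_comp] at h2
    rw [hσ'σ, TensorProduct.map_id] at h2
    simpa only [LinearMap.id_comp, LinearMap.comp_assoc] using h2
  -- counit laws
  have hg0 : epsL counitB B ∘ₗ comulB = LinearMap.id := by
    unfold epsL
    rw [LinearMap.comp_assoc]
    exact hB.1.2.1.1
  have hh0 : epsR counitA A ∘ₗ comulA = LinearMap.id := by
    unfold epsR
    rw [LinearMap.comp_assoc]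
    exact hA.1.2.1.2.1
  -- final
  have hfinal : τ.toLinearMap = (TensorProduct.comm k B A).toLinearMap := by
    have h2 := congrArg
      (fun m => TensorProduct.map (epsL counitB A) (epsR counitA B) ∘ₗ m) hcancel
    simp only [← LinearMap.comp_assoc, midMap_counit_natural'] at h2
    rw [LinearMap.comp_assoc, LinearMap.comp_assoc, ← TensorProduct.map_comp, hg0, hh0,
      TensorProduct.map_id, LinearMap.comp_id, LinearMap.comp_id] at h2
    exact h2
  have hτeq : τ = TensorProduct.comm k B A := LinearEquiv.toLinearMap_injective hfinal
  have hsym : τ.symm.toLinearMap = (TensorProduct.comm k A B).toLinearMap := by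
    rw [hτeq]
    apply TensorProduct.ext'
    intro a b
    simp
  exact ⟨hτeq, by rw [hfinal], by rw [hsym]⟩
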